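/- arXiv:2410.12964 — 4 statements merged into one kernel-verified Lean document; each statement's English description precedes it below -/
import Mathlib

section
/- A bipartite graph B with parts X and Y, together with a function f: V(B) → ℕ satisfying ∑_{x∈X} f(x) = ∑_{y∈Y} f(y), contains an f-factor if and only if for all subsets S ⊆ X and T ⊆ Y, e(S,T) + ∑_{y∈Y∖T} f(y) ≥ ∑_{x∈S} f(x). -/
/-!
Induction on the total demand. Call `(S, T)` tight when Ore's inequality is an equality; by
submodularity of `e(S, T)` the tight pairs with `x₀ ∉ S` are closed under
`(S, T), (S', T') ↦ (S ∪ S', T ∩ T')`, so among them there is one, `(S₀, T₀)`, whose `T₀` lies in all the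
others. Ore's inequality for `(insert x₀ S₀, T₀)` forces an edge `x₀ y₀` with `y₀ ∈ T₀`. Deleting
this edge and lowering `f x₀`, `f y₀` by one preserves Ore's condition: the only pairs whose
inequality could break are those with `x₀ ∉ S`, `y₀ ∉ T`, and these are not tight.
-/

open Finset

theorem Finset.sum_update_pred_add {α : Type*} [DecidableEq α] {f : α → ℕ} {a : α}
    (ha : f a ≠ 0) (s : Finset α) :
    ∑ x ∈ s, Function.update f a (f a - 1) x + (if a ∈ s then 1 else 0) = ∑ x ∈ s, f x := by
  have hf : f = Function.update f a (f a - 1) + Pi.single a 1 := by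
    ext x
    rcases eq_or_ne x a with rfl | hx
    · simp only [Pi.add_apply, Function.update_self, Pi.single_eq_same]
      omega
    · simp [hx]
  conv_rhs => rw [hf]
  simp only [Pi.add_apply, sum_add_distrib, sum_pi_single']

theorem Finset.card_filter_insert_of_notMem {α : Type*} [DecidableEq α] (p : α → Prop)
    [DecidablePred p] {a : α} {s : Finset α} (ha : a ∉ s) :
    #{x ∈ insert a s | p x} = #{x ∈ s | p x} + if p a then 1 else 0 := by
  rw [filter_insert]
  split_ifs with hp
  · exact card_insert_of_notMem fun h => ha (mem_filter.1 h).1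
  · rfl

section EdgeCount

variable {X Y : Type*} [DecidableEq X] [DecidableEq Y]

def edgeCount (E : Finset (X × Y)) (S : Finset X) (T : Finset Y) : ℕ :=
  #{e ∈ E | e.1 ∈ S ∧ e.2 ∈ T}

theorem edgeCount_union_inter_add_le (E : Finset (X × Y)) (S₁ S₂ : Finset X)
    (T₁ T₂ : Finset Y) :
    edgeCount E (S₁ ∪ S₂) (T₁ ∩ T₂) + edgeCount E (S₁ ∩ S₂) (T₁ ∪ T₂) ≤
      edgeCount E S₁ T₁ + edgeCount E S₂ T₂ := by
  simp only [edgeCount, card_filter, ← sum_add_distrib]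
  refine sum_le_sum fun e _ => ?_
  by_cases h₁ : e.1 ∈ S₁ <;> by_cases h₂ : e.1 ∈ S₂ <;> by_cases h₃ : e.2 ∈ T₁ <;>
    by_cases h₄ : e.2 ∈ T₂ <;> simp [h₁, h₂, h₃, h₄]

theorem edgeCount_eq_erase_add {E : Finset (X × Y)} {e : X × Y} (he : e ∈ E) (S : Finset X)
    (T : Finset Y) :
    edgeCount E S T = edgeCount (E.erase e) S T + if e.1 ∈ S ∧ e.2 ∈ T then 1 else 0 := by
  rw [edgeCount, edgeCount, filter_erase _ e]
  split_ifs with h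
  · exact (card_erase_add_one (mem_filter.2 ⟨he, h⟩)).symm
  · rw [add_zero, erase_eq_of_notMem]
    exact fun hm => h (mem_filter.1 hm).2

end EdgeCount

section Ore

variable {X Y : Type*} [DecidableEq X] [DecidableEq Y]

def IsFactor (E H : Finset (X × Y)) (fX : X → ℕ) (fY : Y → ℕ) : Prop :=
  H ⊆ E ∧ (∀ x, #{e ∈ H | e.1 = x} = fX x) ∧ ∀ y, #{e ∈ H | e.2 = y} = fY y

variable [Fintype Y]

def OreCondition (E : Finset (X × Y)) (fX : X → ℕ) (fY : Y → ℕ) : Prop :=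
  ∀ S T, ∑ x ∈ S, fX x ≤ edgeCount E S T + ∑ y ∈ Tᶜ, fY y

def IsTight (E : Finset (X × Y)) (fX : X → ℕ) (fY : Y → ℕ) (S : Finset X) (T : Finset Y) :
    Prop :=
  ∑ x ∈ S, fX x = edgeCount E S T + ∑ y ∈ Tᶜ, fY y

variable {E : Finset (X × Y)} {fX : X → ℕ} {fY : Y → ℕ}

theorem oreCondition_of_isFactor {H : Finset (X × Y)} (hH : IsFactor E H fX fY) :
    OreCondition E fX fY := by
  obtain ⟨hHE, hdegX, hdegY⟩ := hH
  intro S T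
  calc ∑ x ∈ S, fX x
      = #{e ∈ H | e.1 ∈ S} := by
        simp only [← hdegX, sum_card_fiberwise_eq_card_filter]
    _ = #{e ∈ H | e.1 ∈ S ∧ e.2 ∈ T} + #{e ∈ H | e.1 ∈ S ∧ e.2 ∉ T} := by
        rw [← filter_filter, ← filter_filter, card_filter_add_card_filter_not]
    _ ≤ edgeCount E S T + #{e ∈ H | e.2 ∈ Tᶜ} := by
        gcongr
        · exact card_le_card (filter_subset_filter _ hHE)
        · exact fun he => mem_compl.2 he.2
    _ = edgeCount E S T + ∑ y ∈ Tᶜ, fY y := by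
        simp only [← hdegY, sum_card_fiberwise_eq_card_filter]

theorem IsTight.union_inter (hE : OreCondition E fX fY) {S₁ S₂ : Finset X} {T₁ T₂ : Finset Y}
    (h₁ : IsTight E fX fY S₁ T₁) (h₂ : IsTight E fX fY S₂ T₂) :
    IsTight E fX fY (S₁ ∪ S₂) (T₁ ∩ T₂) := by
  have hunion := hE (S₁ ∪ S₂) (T₁ ∩ T₂)
  have hinter := hE (S₁ ∩ S₂) (T₁ ∪ T₂)
  have hsub := edgeCount_union_inter_add_le E S₁ S₂ T₁ T₂
  have hX : ∑ x ∈ S₁ ∪ S₂, fX x + ∑ x ∈ S₁ ∩ S₂, fX x = ∑ x ∈ S₁, fX x + ∑ x ∈ S₂, fX x :=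
    sum_union_inter
  have hY : ∑ y ∈ (T₁ ∩ T₂)ᶜ, fY y + ∑ y ∈ (T₁ ∪ T₂)ᶜ, fY y =
      ∑ y ∈ T₁ᶜ, fY y + ∑ y ∈ T₂ᶜ, fY y := by
    rw [compl_inter, compl_union, sum_union_inter]
  unfold IsTight at *
  omega

variable [Fintype X]

theorem exists_isTight_forall_subset (hE : OreCondition E fX fY) (x₀ : X) :
    ∃ S₀ T₀, x₀ ∉ S₀ ∧ IsTight E fX fY S₀ T₀ ∧
      ∀ S T, x₀ ∉ S → IsTight E fX fY S T → T₀ ⊆ T := by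
  let P : Finset (Finset X × Finset Y) :=
    {p | x₀ ∉ p.1 ∧ ∑ x ∈ p.1, fX x = edgeCount E p.1 p.2 + ∑ y ∈ p.2ᶜ, fY y}
  have hP : (∅, univ) ∈ P := mem_filter.2 ⟨mem_univ _, by simp [edgeCount]⟩
  obtain ⟨⟨S₀, T₀⟩, h₀, hmin⟩ := exists_min_image P (fun p => #p.2) ⟨_, hP⟩
  simp only [P, mem_filter, mem_univ, true_and] at h₀ hmin
  refine ⟨S₀, T₀, h₀.1, h₀.2, fun S T hS hT => ?_⟩
  have hle := hmin (S₀ ∪ S, T₀ ∩ T) ⟨by simp [h₀.1, hS], IsTight.union_inter hE h₀.2 hT⟩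
  exact inter_eq_left.1 (eq_of_subset_of_card_le inter_subset_left hle)

theorem exists_edge_of_oreCondition (hE : OreCondition E fX fY) {x₀ : X} (hx₀ : fX x₀ ≠ 0) :
    ∃ y₀, (x₀, y₀) ∈ E ∧ ∀ S T, x₀ ∉ S → y₀ ∉ T →
      ∑ x ∈ S, fX x < edgeCount E S T + ∑ y ∈ Tᶜ, fY y := by
  obtain ⟨S₀, T₀, hS₀, htight, hmin⟩ := exists_isTight_forall_subset hE x₀
  have hcount : fX x₀ ≤ edgeCount E {x₀} T₀ := by
    have hins := hE (insert x₀ S₀) T₀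
    have hsub := edgeCount_union_inter_add_le E {x₀} S₀ T₀ T₀
    rw [sum_insert hS₀] at hins
    rw [← insert_eq, inter_self, union_self] at hsub
    unfold IsTight at htight
    omega
  obtain ⟨⟨x, y₀⟩, he⟩ := card_pos.1 (lt_of_lt_of_le (Nat.pos_of_ne_zero hx₀) hcount)
  simp only [mem_filter, mem_singleton] at he
  obtain ⟨heE, rfl, hy₀⟩ := he
  refine ⟨y₀, heE, fun S T hS hT => lt_of_le_of_ne (hE S T) fun h => ?_⟩
  exact hT (hmin S T hS h hy₀)

end Ore

section Reduction

variable {X Y : Type*} [DecidableEq X] [DecidableEq Y]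
variable {E : Finset (X × Y)} {fX : X → ℕ} {fY : Y → ℕ} {x₀ : X} {y₀ : Y}

theorem OreCondition.erase [Fintype Y] (hE : OreCondition E fX fY) (hxy : (x₀, y₀) ∈ E)
    (hx₀ : fX x₀ ≠ 0) (hy₀ : fY y₀ ≠ 0)
    (hslack : ∀ S T, x₀ ∉ S → y₀ ∉ T → ∑ x ∈ S, fX x < edgeCount E S T + ∑ y ∈ Tᶜ, fY y) :
    OreCondition (E.erase (x₀, y₀)) (Function.update fX x₀ (fX x₀ - 1))
      (Function.update fY y₀ (fY y₀ - 1)) := by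
  intro S T
  have hST := hE S T
  have hX := sum_update_pred_add hx₀ S
  have hY := sum_update_pred_add hy₀ Tᶜ
  have hEST := edgeCount_eq_erase_add hxy S T
  by_cases hS : x₀ ∈ S <;> by_cases hT : y₀ ∈ T <;>
    simp only [hS, hT, mem_compl, not_true, not_false_eq_true, and_true, and_false, if_true,
      if_false] at hX hY hEST
  · omega
  · omega
  · omega
  · have := hslack S T hS hT
    omega

theorem IsFactor.insert {H : Finset (X × Y)}
    (hH : IsFactor (E.erase (x₀, y₀)) H (Function.update fX x₀ (fX x₀ - 1))
      (Function.update fY y₀ (fY y₀ - 1)))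
    (hxy : (x₀, y₀) ∈ E) (hx₀ : fX x₀ ≠ 0) (hy₀ : fY y₀ ≠ 0) :
    IsFactor E (insert (x₀, y₀) H) fX fY := by
  obtain ⟨hHE, hdegX, hdegY⟩ := hH
  have hnotMem : (x₀, y₀) ∉ H := fun h => notMem_erase _ _ (hHE h)
  refine ⟨insert_subset hxy (hHE.trans (erase_subset _ _)), fun x => ?_, fun y => ?_⟩
  · rw [card_filter_insert_of_notMem _ hnotMem, hdegX]
    rcases eq_or_ne x x₀ with rfl | hx
    · simp only [Function.update_self, if_true]
      omega
    · simp [hx, Ne.symm hx]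
  · rw [card_filter_insert_of_notMem _ hnotMem, hdegY]
    rcases eq_or_ne y y₀ with rfl | hy
    · simp only [Function.update_self, if_true]
      omega
    · simp [hy, Ne.symm hy]

variable [Fintype X] [Fintype Y]

theorem exists_isFactor_of_oreCondition (hsum : ∑ x, fX x = ∑ y, fY y)
    (hE : OreCondition E fX fY) : ∃ H, IsFactor E H fX fY := by
  induction hn : ∑ x, fX x generalizing E fX fY with
  | zero =>
    have hfX : ∀ x, fX x = 0 := fun x => sum_eq_zero_iff.1 hn x (mem_univ x)
    have hfY : ∀ y, fY y = 0 := fun y => sum_eq_zero_iff.1 (hsum ▸ hn) y (mem_univ y)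
    exact ⟨∅, empty_subset E, by simp [hfX], by simp [hfY]⟩
  | succ n ih =>
    obtain ⟨x₀, -, hx₀⟩ := exists_ne_zero_of_sum_ne_zero (hn.trans_ne n.succ_ne_zero)
    obtain ⟨y₀, hxy, hslack⟩ := exists_edge_of_oreCondition hE hx₀
    have hy₀ : fY y₀ ≠ 0 :=
      Nat.pos_iff_ne_zero.1 <| by simpa [edgeCount] using hslack ∅ {y₀}ᶜ (notMem_empty x₀) (by simp)
    have hX := sum_update_pred_add hx₀ univ
    have hY := sum_update_pred_add hy₀ univ
    simp only [mem_univ, if_true] at hX hY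
    obtain ⟨H, hH⟩ := ih (by omega) (hE.erase hxy hx₀ hy₀ hslack) (by omega)
    exact ⟨_, hH.insert hxy hx₀ hy₀⟩

end Reduction

/-- Ore's theorem for bipartite `f`-factors: a bipartite graph with parts `X`, `Y`,
edge set `E`, and demands `fX`, `fY` with equal total on both sides, contains an
`f`-factor iff for all `S ⊆ X`, `T ⊆ Y` we have
`e(S,T) + ∑_{y ∉ T} fY y ≥ ∑_{x ∈ S} fX x`. -/
theorem stmt_2 {X Y : Type*} [Fintype X] [Fintype Y] [DecidableEq X] [DecidableEq Y]
    (E : Finset (X × Y)) (fX : X → ℕ) (fY : Y → ℕ)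
    (hsum : ∑ x, fX x = ∑ y, fY y) :
    (∃ H : Finset (X × Y), H ⊆ E ∧
        (∀ x : X, (H.filter (fun e => e.1 = x)).card = fX x) ∧
        (∀ y : Y, (H.filter (fun e => e.2 = y)).card = fY y)) ↔
    (∀ S : Finset X, ∀ T : Finset Y,
        ∑ x ∈ S, fX x ≤
          (E.filter (fun e => e.1 ∈ S ∧ e.2 ∈ T)).card + ∑ y ∈ Tᶜ, fY y) :=
  ⟨fun ⟨_, hH⟩ => oreCondition_of_isFactor hH, exists_isFactor_of_oreCondition hsum⟩
end

section
/- A bipartite graph B with parts X and Y each of size n contains an r-regular spanning subgraph if and only if for all S ⊆ X and T ⊆ Y, e(S,T) ≥ r·(|S| + |T| − n), where the right-hand side is interpreted as an integer. -/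
/-!
Necessity is double counting: the `r|S|` edges of an `r`-regular `H ⊆ E` leaving `S` either end
in `T`, hence are edges of `E` between `S` and `T`, or end in `Tᶜ`, which receives at most
`r|Tᶜ|` of them.

Sufficiency reduces to Hall's theorem through Tutte's gadget: each `x` gets `r` slots
`(x, i)`, each `y` gets `r` slots `(y, j)`, and each edge `e` gets two copies, one on each side.
A slot of `x` may take the right copy of an edge at `x`; the left copy of an edge `e` takes
either its own right copy (`e` unused) or a slot of `e.2` (`e` used, its right copy having gone
to a slot of `e.1`). A matching saturating the left side thus picks an `H ⊆ E` in which every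
`x` has degree `r` and every `y` degree at most `r`, hence exactly `r` because `|X| = |Y|`.
Hall's condition for a set `W` of left vertices follows from the cut condition applied to the
`x`'s whose slots are in `W` and the complement of the set of right ends of edges in `W`.
-/

open Finset Function

lemma cut_condition_iff {X Y : Type*} [Fintype Y] [DecidableEq Y] {n : ℕ}
    (hY : Fintype.card Y = n) (r m : ℕ) (S : Finset X) (T : Finset Y) :
    (r : ℤ) * (#S + #T - n) ≤ m ↔ r * #S ≤ m + r * #Tᶜ := by
  have hT : #T ≤ n := hY ▸ card_le_univ T
  rw [card_compl, hY]
  zify [hT]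
  constructor <;> intro h <;> linarith

lemma mul_card_le_card_edges_add_mul_card_compl {X Y : Type*} [DecidableEq X] [Fintype Y]
    [DecidableEq Y] {E H : Finset (X × Y)} {r : ℕ} (hHE : H ⊆ E)
    (hX : ∀ x, r ≤ #{e ∈ H | e.1 = x}) (hY : ∀ y, #{e ∈ H | e.2 = y} ≤ r)
    (S : Finset X) (T : Finset Y) :
    r * #S ≤ #{e ∈ E | e.1 ∈ S ∧ e.2 ∈ T} + r * #Tᶜ := calc
  r * #S = ∑ _x ∈ S, r := by rw [sum_const, smul_eq_mul, mul_comm]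
  _ ≤ ∑ x ∈ S, #{e ∈ H | e.1 = x} := sum_le_sum fun x _ => hX x
  _ = #{e ∈ H | e.1 ∈ S} := sum_card_fiberwise_eq_card_filter H S Prod.fst
  _ = #{e ∈ H | e.1 ∈ S ∧ e.2 ∈ T} + #{e ∈ H | e.1 ∈ S ∧ e.2 ∉ T} := by
    rw [← filter_filter, ← filter_filter, card_filter_add_card_filter_not]
  _ ≤ #{e ∈ E | e.1 ∈ S ∧ e.2 ∈ T} + #{e ∈ H | e.2 ∈ Tᶜ} := by
    gcongr ?_ + ?_
    · exact card_le_card (filter_subset_filter _ hHE)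
    · exact card_le_card fun e => by simp only [mem_filter, mem_compl]; tauto
  _ = #{e ∈ E | e.1 ∈ S ∧ e.2 ∈ T} + ∑ y ∈ Tᶜ, #{e ∈ H | e.2 = y} := by
    rw [sum_card_fiberwise_eq_card_filter]
  _ ≤ #{e ∈ E | e.1 ∈ S ∧ e.2 ∈ T} + r * #Tᶜ := by
    gcongr
    exact (sum_le_sum fun y _ => hY y).trans_eq (by rw [sum_const, smul_eq_mul, mul_comm])

section

variable {X Y : Type*} [Fintype X] [Fintype Y] [DecidableEq X] [DecidableEq Y]

lemma card_filter_snd_eq_of_card_filter_fst_eq {H : Finset (X × Y)} {r : ℕ}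
    (hcard : Fintype.card X = Fintype.card Y) (hX : ∀ x, #{e ∈ H | e.1 = x} = r)
    (hY : ∀ y, #{e ∈ H | e.2 = y} ≤ r) (y : Y) : #{e ∈ H | e.2 = y} = r := by
  have hsum : ∑ y, #{e ∈ H | e.2 = y} = ∑ _y : Y, r := calc
    ∑ y, #{e ∈ H | e.2 = y} = #H := (card_eq_sum_card_fiberwise fun _ _ => mem_univ _).symm
    _ = ∑ x, #{e ∈ H | e.1 = x} := card_eq_sum_card_fiberwise fun _ _ => mem_univ _
    _ = ∑ _y : Y, r := by simp only [hX, sum_const, card_univ, hcard]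
  exact (sum_eq_sum_iff_of_le fun y _ => hY y).1 hsum y (mem_univ y)

variable (E : Finset (X × Y)) (r : ℕ)

def TutteGadgetAdj : (X × Fin r) ⊕ (X × Y) → (X × Y) ⊕ (Y × Fin r) → Prop
  | .inl p, .inl e => e ∈ E ∧ e.1 = p.1
  | .inl _, .inr _ => False
  | .inr e, .inl e' => e' = e
  | .inr e, .inr q => e ∈ E ∧ e.2 = q.1

instance : DecidableRel (TutteGadgetAdj E r) := fun a b => by
  cases a <;> cases b <;> unfold TutteGadgetAdj <;> infer_instance

lemma card_le_card_filter_tutteGadgetAdj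
    (hcut : ∀ S T, r * #S ≤ #{e ∈ E | e.1 ∈ S ∧ e.2 ∈ T} + r * #Tᶜ)
    (W : Finset ((X × Fin r) ⊕ (X × Y))) :
    #W ≤ #{b | ∃ a ∈ W, TutteGadgetAdj E r a b} := by
  set S := W.toLeft.image Prod.fst
  set F := W.toRight
  set T := (F ∩ E).image Prod.snd
  set D := {e ∈ E | e.1 ∈ S ∧ e.2 ∈ Tᶜ}
  have hW : #W ≤ #S * r + #F := by
    rw [← card_toLeft_add_card_toRight]
    gcongr
    calc #W.toLeft ≤ #(S ×ˢ (univ : Finset (Fin r))) :=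
          card_le_card fun p hp => mem_product.2 ⟨mem_image_of_mem _ hp, mem_univ _⟩
      _ = #S * r := by simp
  have hD : r * #S ≤ #D + r * #T := by simpa only [compl_compl] using hcut S Tᶜ
  have hDF : Disjoint D F := disjoint_left.2 fun e heD heF =>
    mem_compl.1 (mem_filter.1 heD).2.2
      (mem_image_of_mem _ (mem_inter.2 ⟨heF, (mem_filter.1 heD).1⟩))
  have hN :
      (D ∪ F).disjSum (T ×ˢ univ) ⊆ ({b | ∃ a ∈ W, TutteGadgetAdj E r a b} : Finset _) := by
    rintro (e | ⟨y, j⟩) hb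
    · rw [inl_mem_disjSum, mem_union] at hb
      rw [mem_filter]
      rcases hb with heD | heF
      · obtain ⟨p, hp, hpe⟩ := mem_image.1 (mem_filter.1 heD).2.1
        exact ⟨mem_univ _, .inl p, mem_toLeft.1 hp, (mem_filter.1 heD).1, hpe.symm⟩
      · exact ⟨mem_univ _, .inr e, mem_toRight.1 heF, rfl⟩
    · rw [inr_mem_disjSum, mem_product] at hb
      obtain ⟨e, he, rfl⟩ := mem_image.1 hb.1
      exact mem_filter.2 ⟨mem_univ _, .inr e, mem_toRight.1 (mem_inter.1 he).1,
        (mem_inter.1 he).2, rfl⟩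
  calc #W ≤ #S * r + #F := hW
    _ ≤ #D + #F + #T * r := by linarith [mul_comm r #S, mul_comm r #T]
    _ = #((D ∪ F).disjSum (T ×ˢ univ)) := by
      rw [card_disjSum, card_union_of_disjoint hDF, card_product, card_univ, Fintype.card_fin]
    _ ≤ _ := card_le_card hN

lemma exists_regular_subset_of_tutteGadgetAdj (hcard : Fintype.card X = Fintype.card Y)
    {f : (X × Fin r) ⊕ (X × Y) → (X × Y) ⊕ (Y × Fin r)} (hf : Injective f)
    (hadj : ∀ a, TutteGadgetAdj E r a (f a)) :
    ∃ H ⊆ E, (∀ x, #{e ∈ H | e.1 = x} = r) ∧ ∀ y, #{e ∈ H | e.2 = y} = r := by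
  have hslot : ∀ p : X × Fin r, ∃ e, f (.inl p) = .inl e ∧ e ∈ E ∧ e.1 = p.1 := by
    intro p
    have hp := hadj (.inl p)
    rcases hfp : f (.inl p) with e | q <;> rw [hfp] at hp
    · exact ⟨e, rfl, hp⟩
    · exact hp.elim
  choose g hfg hgE hg1 using hslot
  have hg : Injective g := fun p p' h => Sum.inl_injective (hf (by rw [hfg, hfg, h]))
  have hX : ∀ x, #{e ∈ univ.image g | e.1 = x} = r := by
    intro x
    rw [filter_image, card_image_of_injective _ hg]
    calc #{p | (g p).1 = x} = #({x} ×ˢ (univ : Finset (Fin r))) := by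
          congr 1; ext p; simp [hg1, Prod.ext_iff, eq_comm]
      _ = r := by simp
  have hY : ∀ y, #{e ∈ univ.image g | e.2 = y} ≤ r := by
    intro y
    calc #{e ∈ univ.image g | e.2 = y} ≤ #(({y} ×ˢ (univ : Finset (Fin r))).map .inr) := by
          refine card_le_card_of_injOn (fun e => f (.inr e)) ?_
            fun e _ e' _ h => Sum.inr_injective (hf h)
          intro e he
          obtain ⟨heH, rfl⟩ := mem_filter.1 he
          obtain ⟨p, -, rfl⟩ := mem_image.1 heH
          have hq := hadj (.inr (g p))
          rcases hfe : f (.inr (g p)) with e' | q <;> rw [hfe] at hq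
          · obtain rfl : e' = g p := hq
            exact absurd (hf (hfe.trans (hfg p).symm)) Sum.inr_ne_inl
          · simp [hq.2, hfe]
      _ = r := by simp
  exact ⟨univ.image g, image_subset_iff.2 fun p _ => hgE p, hX,
    card_filter_snd_eq_of_card_filter_fst_eq hcard hX hY⟩

end

/-- Gale–Ryser criterion: a bipartite graph with parts of size `n` contains an
`r`-regular spanning subgraph iff `e(S,T) ≥ r·(|S| + |T| − n)` (as integers)
for all `S ⊆ X`, `T ⊆ Y`. -/
theorem stmt_3 {X Y : Type*} [Fintype X] [Fintype Y] [DecidableEq X] [DecidableEq Y]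
    (n : ℕ) (hX : Fintype.card X = n) (hY : Fintype.card Y = n)
    (E : Finset (X × Y)) (r : ℕ) :
    (∃ H : Finset (X × Y), H ⊆ E ∧
        (∀ x : X, (H.filter (fun e => e.1 = x)).card = r) ∧
        (∀ y : Y, (H.filter (fun e => e.2 = y)).card = r)) ↔
    (∀ S : Finset X, ∀ T : Finset Y,
        (r : ℤ) * ((S.card : ℤ) + T.card - n) ≤
          ((E.filter (fun e => e.1 ∈ S ∧ e.2 ∈ T)).card : ℤ)) := by
  simp only [cut_condition_iff hY]
  constructor
  · rintro ⟨H, hHE, hHX, hHY⟩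
    exact mul_card_le_card_edges_add_mul_card_compl hHE (fun x => (hHX x).ge)
      (fun y => (hHY y).le)
  · intro hcut
    obtain ⟨f, hf, hadj⟩ := (Fintype.all_card_le_filter_rel_iff_exists_injective _).1
      (card_le_card_filter_tutteGadgetAdj E r hcut)
    exact exists_regular_subset_of_tutteGadgetAdj E r (hX.trans hY.symm) hf hadj
end

section
/- Let π be a uniformly random permutation of {1,…,n}. Then the probability that π has at least 4·log(n+1)/log 2 cycles is at most 1/(n+1)³. -/
open Equiv Equiv.Perm Finset

section Aux

variable {α : Type*} [DecidableEq α] [Fintype α]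

/-- General cycle count (including fixed points) for a permutation of a fintype. -/
def ncG (π : Perm α) : ℕ :=
  Multiset.card π.cycleType + (Fintype.card α - π.support.card)

lemma support_card_le (π : Perm α) : π.support.card ≤ Fintype.card α := by
  simpa using Finset.card_le_card (Finset.subset_univ π.support)

/-- Cutting a point out of its (nontrivial) cycle increases the cycle count by one. -/
lemma ncG_swap_mul (π : Perm α) (x : α) (hx : π x ≠ x) :
    ncG (swap x (π x) * π) = ncG π + 1 := by
  classical
  set c := π.cycleOf x with hc
  have hcmem : c ∈ π.cycleFactorsFinset :=
    cycleOf_mem_cycleFactorsFinset_iff.mpr (mem_support.mpr hx)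
  have hcx : c x = π x := π.cycleOf_apply_self x
  have hccyc : IsCycle c := isCycle_cycleOf π hx
  have hcxne : c x ≠ x := by rw [hcx]; exact hx
  have hd : Disjoint (π * c⁻¹) c := disjoint_mul_inv_of_mem_cycleFactorsFinset hcmem
  set d := π * c⁻¹ with hdd
  have hπ : π = d * c := by rw [hdd]; group
  have hxc : x ∈ c.support := mem_support.mpr hcxne
  have hcxc : c x ∈ c.support := apply_mem_support.mpr hxc
  have hswap_d : Disjoint (swap x (c x)) d := by
    intro a
    rcases hd a with h | h
    · exact Or.inr h
    · have ha : a ∉ c.support := by simp [mem_support, h]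
      exact Or.inl (swap_apply_of_ne_of_ne (fun h' => ha (h' ▸ hxc)) (fun h' => ha (h' ▸ hcxc)))
  have hσ : swap x (π x) * π = d * (swap x (c x) * c) := by
    rw [← hcx, hπ, ← mul_assoc, (hswap_d.commute).eq, mul_assoc]
  have hsuppπ : π.support.card = d.support.card + c.support.card := by
    rw [hπ, hd.card_support_mul]
  have hctπ : Multiset.card π.cycleType = Multiset.card d.cycleType + 1 := by
    rw [hπ, hd.cycleType_mul, Multiset.card_add, hccyc.cycleType]
    simp
  have hN := support_card_le π
  by_cases h2 : c (c x) = x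
  · -- the cycle of x is a transposition; it disappears
    have hcswap : c = swap x (c x) := hccyc.eq_swap_of_apply_apply_eq_self hcxne h2
    have hcc : swap x (c x) * c = 1 := by
      nth_rewrite 2 [hcswap]
      exact swap_mul_self _ _
    have hcsupp : c.support.card = 2 := by
      rw [hcswap]
      exact card_support_swap hcxne.symm
    unfold ncG
    rw [hσ, hcc, mul_one, hctπ, hsuppπ, hcsupp]
    omega
  · -- the cycle of x gets shortened by one
    have hc'cyc : IsCycle (swap x (c x) * c) := hccyc.swap_mul hcxne h2
    have hc'supp : (swap x (c x) * c).support = c.support \ {x} := support_swap_mul_eq c x h2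
    have hc'card : (swap x (c x) * c).support.card = c.support.card - 1 := by
      rw [hc'supp, Finset.card_sdiff_of_subset (by simpa using hxc)]
      simp
    have hdisj : Disjoint d (swap x (c x) * c) := by
      rw [disjoint_iff_disjoint_support] at hd ⊢
      exact hd.mono_right (hc'supp ▸ Finset.sdiff_subset)
    have h2le : 2 ≤ c.support.card := hccyc.two_le_card_support
    have hct : Multiset.card (swap x (π x) * π).cycleType
        = Multiset.card d.cycleType + 1 := by
      rw [hσ, hdisj.cycleType_mul, Multiset.card_add, hc'cyc.cycleType]
      simp
    have hsupp : (swap x (π x) * π).support.card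
        = d.support.card + (c.support.card - 1) := by
      rw [hσ, hdisj.card_support_mul, hc'card]
    unfold ncG
    rw [hct, hsupp, hctπ, hsuppπ]
    omega

end Aux

/-- The equivalence between `Fin n` and nonzero elements of `Fin (n+1)`. -/
def succEquiv (n : ℕ) : Fin n ≃ {x : Fin (n + 1) // x ≠ 0} where
  toFun x := ⟨x.succ, Fin.succ_ne_zero x⟩
  invFun y := (y : Fin (n + 1)).pred y.2
  left_inv x := by simp
  right_inv y := by simp

lemma decompose_zero {n : ℕ} (e : Perm (Fin n)) :
    Equiv.Perm.decomposeFin.symm (0, e) = e.extendDomain (succEquiv n) := by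
  refine Equiv.ext fun a => ?_
  refine Fin.cases ?_ (fun x => ?_) a
  · rw [Equiv.Perm.decomposeFin_symm_apply_zero,
      Equiv.Perm.extendDomain_apply_not_subtype _ _ (by simp)]
  · rw [Equiv.Perm.decomposeFin_symm_apply_succ]
    have h : (e.extendDomain (succEquiv n)) x.succ = (e x).succ :=
      Equiv.Perm.extendDomain_apply_image e (succEquiv n) x
    rw [h]
    simp

lemma ncG_decompose_zero {n : ℕ} (e : Perm (Fin n)) :
    ncG (Equiv.Perm.decomposeFin.symm (0, e)) = ncG e + 1 := by
  have hs := support_card_le e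
  rw [decompose_zero]
  unfold ncG
  rw [Equiv.Perm.cycleType_extendDomain, Equiv.Perm.card_support_extend_domain]
  simp only [Fintype.card_fin] at *
  omega

lemma ncG_decompose_ne_zero {n : ℕ} {p : Fin (n + 1)} (hp : p ≠ 0) (e : Perm (Fin n)) :
    ncG (Equiv.Perm.decomposeFin.symm (p, e)) = ncG e := by
  set π := Equiv.Perm.decomposeFin.symm (p, e) with hπ
  have h0 : π 0 = p := Equiv.Perm.decomposeFin_symm_apply_zero p e
  have key : swap 0 (π 0) * π = Equiv.Perm.decomposeFin.symm (0, e) := by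
    ext a
    refine Fin.cases ?_ (fun x => ?_) a
    · simp [h0, hπ]
    · simp [h0, hπ, swap_apply_self]
  have hcut := ncG_swap_mul π 0 (by rw [h0]; exact hp)
  rw [key, ncG_decompose_zero] at hcut
  omega

lemma sum_two_pow_ncG (n : ℕ) :
    ∑ π : Perm (Fin n), 2 ^ ncG π = (n + 1).factorial := by
  induction n with
  | zero =>
    have h1 : ∀ π : Perm (Fin 0), π = 1 := fun π => Equiv.ext fun x => x.elim0
    have h2 : (Finset.univ : Finset (Perm (Fin 0))) = {1} :=
      Finset.eq_singleton_iff_unique_mem.mpr ⟨Finset.mem_univ _, fun π _ => h1 π⟩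
    rw [h2, Finset.sum_singleton]
    simp [ncG]
  | succ n ih =>
    calc ∑ π : Perm (Fin (n + 1)), 2 ^ ncG π
        = ∑ pe : Fin (n + 1) × Perm (Fin n), 2 ^ ncG (Equiv.Perm.decomposeFin.symm pe) :=
          (Equiv.sum_comp Equiv.Perm.decomposeFin.symm _).symm
      _ = ∑ p : Fin (n + 1), ∑ e : Perm (Fin n), 2 ^ ncG (Equiv.Perm.decomposeFin.symm (p, e)) :=
          Fintype.sum_prod_type _
      _ = ∑ p : Fin (n + 1), ∑ e : Perm (Fin n),
            (2 ^ ncG e + if p = 0 then 2 ^ ncG e else 0) := by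
          refine Finset.sum_congr rfl fun p _ => Finset.sum_congr rfl fun e _ => ?_
          by_cases hp : p = 0
          · subst hp
            rw [ncG_decompose_zero, if_pos rfl, pow_succ, mul_two]
          · rw [ncG_decompose_ne_zero hp]
            simp [hp]
      _ = ∑ p : Fin (n + 1), ((n + 1).factorial + if p = 0 then (n + 1).factorial else 0) := by
          refine Finset.sum_congr rfl fun p _ => ?_
          rw [Finset.sum_add_distrib, ih]
          congr 1
          split <;> simp [ih]
      _ = (n + 2).factorial := by
          rw [Finset.sum_add_distrib, Finset.sum_const, Finset.sum_ite_eq' Finset.univ 0]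
          simp [Nat.factorial_succ]
          ring

/-- The number of cycles of a permutation, including fixed points as 1-cycles. -/
def numCycles {n : ℕ} (π : Equiv.Perm (Fin n)) : ℕ :=
  π.cycleType.card + (n - π.support.card)

lemma numCycles_eq_ncG {n : ℕ} (π : Equiv.Perm (Fin n)) : numCycles π = ncG π := by
  simp [numCycles, ncG]

/-- For a uniformly random permutation `π` of `{1,…,n}`, the probability that `π` has
at least `4·log(n+1)/log 2` cycles is at most `1/(n+1)³`. -/
theorem stmt_5 (n : ℕ) :
    (Nat.card {π : Equiv.Perm (Fin n) //
        4 * Real.log (n + 1) / Real.log 2 ≤ (numCycles π : ℝ)} : ℝ) / n.factorial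
      ≤ 1 / (n + 1) ^ 3 := by
  classical
  have hkey : ∀ π : Equiv.Perm (Fin n),
      4 * Real.log (n + 1) / Real.log 2 ≤ (numCycles π : ℝ) →
        (n + 1) ^ 4 ≤ 2 ^ numCycles π := by
    intro π hπ
    have hlog2 : (0:ℝ) < Real.log 2 := Real.log_pos one_lt_two
    have hpos : (0:ℝ) < (n:ℝ) + 1 := by positivity
    have h1 : ((n:ℝ) + 1) ^ 4 = (2:ℝ) ^ (4 * Real.log ((n:ℝ) + 1) / Real.log 2) := by
      rw [Real.rpow_def_of_pos (by norm_num : (0:ℝ) < 2),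
        mul_comm (Real.log 2), div_mul_cancel₀ _ (ne_of_gt hlog2),
        show (4:ℝ) * Real.log ((n:ℝ) + 1) = Real.log (((n:ℝ) + 1) ^ 4) by
          rw [Real.log_pow]; norm_num,
        Real.exp_log (by positivity)]
    have h2 : (2:ℝ) ^ (4 * Real.log ((n:ℝ) + 1) / Real.log 2)
        ≤ (2:ℝ) ^ ((numCycles π : ℕ) : ℝ) :=
      Real.rpow_le_rpow_of_exponent_le one_le_two hπ
    have h3 : ((n:ℝ) + 1) ^ 4 ≤ (2:ℝ) ^ (numCycles π : ℕ) := by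
      rw [← Real.rpow_natCast 2 (numCycles π)]
      exact h1 ▸ h2
    exact_mod_cast h3
  set P : Equiv.Perm (Fin n) → Prop := fun π =>
    4 * Real.log (n + 1) / Real.log 2 ≤ (numCycles π : ℝ) with hP
  have hm : (Finset.univ.filter P).card * (n + 1) ^ 4 ≤ (n + 1).factorial := by
    calc (Finset.univ.filter P).card * (n + 1) ^ 4
        = ∑ _π ∈ Finset.univ.filter P, (n + 1) ^ 4 := by
          rw [Finset.sum_const, smul_eq_mul]
      _ ≤ ∑ π ∈ Finset.univ.filter P, 2 ^ numCycles π :=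
          Finset.sum_le_sum fun π hπ => hkey π (Finset.mem_filter.mp hπ).2
      _ ≤ ∑ π : Equiv.Perm (Fin n), 2 ^ numCycles π :=
          Finset.sum_le_sum_of_subset (Finset.filter_subset _ _)
      _ = (n + 1).factorial := by
          rw [← sum_two_pow_ncG n]
          exact Finset.sum_congr rfl fun π _ => by rw [numCycles_eq_ncG]
  have hcard : Nat.card {π : Equiv.Perm (Fin n) // P π} = (Finset.univ.filter P).card := by
    rw [Nat.card_eq_fintype_card, Fintype.card_subtype]
  rw [hcard]
  have hfac : (0:ℝ) < (n.factorial : ℝ) := by exact_mod_cast n.factorial_pos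
  have hpos : (0:ℝ) < (n:ℝ) + 1 := by positivity
  rw [div_le_div_iff₀ hfac (by positivity)]
  have hm' : ((Finset.univ.filter P).card : ℝ) * ((n:ℝ) + 1) ^ 4
      ≤ ((n:ℝ) + 1) * n.factorial := by
    have h := hm
    rw [Nat.factorial_succ] at h
    exact_mod_cast h
  nlinarith [hm', hpos, hfac]
end

section
/- Every loopless undirected multigraph G can be properly edge colored with at most Δ(G) + μ(G) colors, where Δ(G) is the maximum degree and μ(G) is the maximum edge multiplicity. -/
/-!
Colour the edges one at a time. Suppose a proper partial colouring with `Δ + μ` colours cannot be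
extended to an uncoloured edge `e₀ = x y`, and take a maximal multi-fan at `x` starting with
`e₀`: edges `x y₀, …, x y_{p-1}`, each after the first coloured with a colour missing at an
earlier `yᵢ`. Recolouring backwards along the fan shows that no colour missing at `x` is missing
at any `yᵢ`; swapping two colours on a Kempe chain then shows that distinct `yᵢ` miss disjoint
sets of colours. By maximality all these colours appear on the `p - 1` coloured fan edges. If the
fan has `t` distinct vertices, each missing at least `μ` colours and `y₀` at least `μ + 1`, this
gives `t μ + 1 ≤ p - 1`, while the multiplicity bound gives `p ≤ t μ`.
-/

namespace SimpleGraph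

open Finset

variable {V : Type*} {G : SimpleGraph V}

lemma Connected.card_degree_le_one_le_two [Fintype V] [DecidableRel G.Adj]
    (hG : G.Connected) (hdeg : ∀ v, G.degree v ≤ 2) :
    #{v | G.degree v ≤ 1} ≤ 2 := by
  have hedges := hG.card_vert_le_card_edgeSet_add_one
  rw [Nat.card_eq_fintype_card, Nat.card_eq_fintype_card, ← edgeFinset_card] at hedges
  have hsum : ∑ v, G.degree v + #{v | G.degree v ≤ 1} ≤ 2 * Fintype.card V := by
    rw [card_filter, ← sum_add_distrib]
    calc ∑ v, (G.degree v + if G.degree v ≤ 1 then 1 else 0) ≤ ∑ _v : V, 2 :=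
          sum_le_sum fun v _ => by have := hdeg v; split_ifs <;> omega
      _ = 2 * Fintype.card V := by simp [mul_comm]
  rw [sum_degrees_eq_twice_card_edges] at hsum
  omega

lemma Reachable.eq_of_degree_le_one [Fintype V] [DecidableRel G.Adj]
    (hdeg : ∀ v, G.degree v ≤ 2) {x u w : V} (hru : G.Reachable x u) (hrw : G.Reachable x w)
    (hxu : x ≠ u) (hxw : x ≠ w) (hx : G.degree x ≤ 1) (hu : G.degree u ≤ 1)
    (hw : G.degree w ≤ 1) : u = w := by
  classical
  by_contra huw
  obtain ⟨p⟩ := hru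
  obtain ⟨q⟩ := hrw
  set s : Set V := {v | v ∈ (p.reverse.append q).support}
  have hconn : (G.induce s).Connected := (p.reverse.append q).connected_induce_support
  have hdeg_le (v : s) : (G.induce s).degree v ≤ G.degree v := by
    rw [← card_neighborFinset_eq_degree, ← card_map (.subtype (· ∈ s)),
      map_neighborFinset_induce]
    exact card_le_card inter_subset_left
  have hle := hconn.card_degree_le_one_le_two fun v => (hdeg_le v).trans (hdeg v)
  have hsub : ({⟨x, by simp [s]⟩, ⟨u, by simp [s]⟩, ⟨w, by simp [s]⟩} : Finset s) ⊆
      univ.filter fun v => (G.induce s).degree v ≤ 1 := by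
    intro v hv
    simp only [mem_insert, mem_singleton] at hv
    rcases hv with rfl | rfl | rfl <;> simp only [mem_filter, mem_univ, true_and] <;>
      exact (hdeg_le _).trans ‹_›
  have := card_le_card hsub
  rw [card_insert_of_notMem (by simp [hxu, hxw]), card_pair (by simpa using huw)] at this
  omega

end SimpleGraph

namespace EdgeColoring

open Finset
open scoped Classical

variable {V E C : Type*} {ep : E → Sym2 V} {φ : E → Option C}

def IsProper (ep : E → Sym2 V) (φ : E → Option C) : Prop :=
  ∀ ⦃v e e' c⦄, v ∈ ep e → v ∈ ep e' → φ e = some c → φ e' = some c → e = e'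

def Missing (ep : E → Sym2 V) (φ : E → Option C) (v : V) (c : C) : Prop :=
  ∀ e, v ∈ ep e → φ e ≠ some c

lemma IsProper.update (hφ : IsProper ep φ) {e : E} {c : C}
    (hc : ∀ v ∈ ep e, Missing ep φ v c) : IsProper ep (Function.update φ e (some c)) := by
  intro v f f' d hf hf' hd hd'
  by_cases hfe : f = e <;> by_cases hf'e : f' = e
  · rw [hfe, hf'e]
  · subst hfe
    simp only [Function.update_self, Option.some.injEq] at hd
    rw [Function.update_of_ne hf'e, ← hd] at hd'
    exact absurd hd' (hc v hf f' hf')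
  · subst hf'e
    simp only [Function.update_self, Option.some.injEq] at hd'
    rw [Function.update_of_ne hfe, ← hd'] at hd
    exact absurd hd (hc v hf' f hf)
  · rw [Function.update_of_ne hfe] at hd
    rw [Function.update_of_ne hf'e] at hd'
    exact hφ hf hf' hd hd'

lemma Missing.update {v : V} {c d : C} (h : Missing ep φ v d) (hdc : d ≠ c) (e : E) :
    Missing ep (Function.update φ e (some c)) v d := by
  intro f hf
  rcases eq_or_ne f e with rfl | hfe
  · simpa using hdc.symm
  · rw [Function.update_of_ne hfe]
    exact h f hf

lemma IsProper.missing_update (hφ : IsProper ep φ) {v : V} {e : E} {c d : C} (hv : v ∈ ep e)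
    (he : φ e = some d) (hdc : d ≠ c) : Missing ep (Function.update φ e (some c)) v d := by
  intro f hf
  rcases eq_or_ne f e with rfl | hfe
  · simpa using hdc.symm
  · rw [Function.update_of_ne hfe]
    exact fun hfd => hfe (hφ hf hv hfd he)

def Stuck (ep : E → Sym2 V) (φ : E → Option C) (e₀ : E) : Prop :=
  ∀ ψ : E → Option C, IsProper ep ψ → (∀ e, (φ e).isSome → (ψ e).isSome) → ψ e₀ = none

lemma Stuck.mono {φ' : E → Option C} {e₀ : E} (h : Stuck ep φ e₀)
    (hdom : ∀ e, (φ e).isSome → (φ' e).isSome) : Stuck ep φ' e₀ :=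
  fun ψ hψ hψdom => h ψ hψ fun e he => hψdom e (hdom e he)

lemma Stuck.eq_none {e₀ : E} (h : Stuck ep φ e₀) (hφ : IsProper ep φ) : φ e₀ = none :=
  h φ hφ fun _ => id

lemma Stuck.not_missing_both {e₀ : E} {x y : V} {c : C} (h : Stuck ep φ e₀)
    (hφ : IsProper ep φ) (he₀ : ep e₀ = s(x, y)) (hx : Missing ep φ x c)
    (hy : Missing ep φ y c) : False := by
  have hc : ∀ v ∈ ep e₀, Missing ep φ v c := by
    intro v hv
    rw [he₀, Sym2.mem_iff] at hv
    rcases hv with rfl | rfl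
    exacts [hx, hy]
  have := h _ (hφ.update hc) fun e he => by
    rcases eq_or_ne e e₀ with rfl | hne
    · simp
    · rwa [Function.update_of_ne hne]
  simp at this

section Kempe

variable (ep φ) (a b : C)

def kempeGraph : SimpleGraph V :=
  SimpleGraph.fromEdgeSet {s | ∃ e, ep e = s ∧ (φ e = some a ∨ φ e = some b)}

def IsKempeClosed (S : Set V) : Prop :=
  ∀ e, (φ e = some a ∨ φ e = some b) → ∀ v ∈ ep e, ∀ w ∈ ep e, v ∈ S → w ∈ S

noncomputable def kempeSwap (S : Set V) (e : E) : Option C :=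
  if ∃ v ∈ ep e, v ∈ S then (φ e).map (Equiv.swap a b) else φ e

variable {ep φ a b}

lemma isKempeClosed_reachable (x : V) :
    IsKempeClosed ep φ a b {v | (kempeGraph ep φ a b).Reachable x v} := by
  intro e he v hv w hw hxv
  rcases eq_or_ne v w with rfl | hvw
  · exact hxv
  refine hxv.trans (SimpleGraph.Adj.reachable ?_)
  rw [kempeGraph, SimpleGraph.fromEdgeSet_adj]
  exact ⟨⟨e, (Sym2.mem_and_mem_iff hvw).1 ⟨hv, hw⟩, he⟩, hvw⟩

lemma map_swap_eq_some_iff {o : Option C} {c : C} :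
    o.map (Equiv.swap a b) = some c ↔ o = some (Equiv.swap a b c) := by
  rw [Option.map_eq_some_iff]
  constructor
  · rintro ⟨d, rfl, rfl⟩
    simp
  · rintro rfl
    exact ⟨_, rfl, by simp⟩

variable {S : Set V}

lemma kempeSwap_of_mem {e : E} {v : V} (hv : v ∈ ep e) (hvS : v ∈ S) :
    kempeSwap ep φ a b S e = (φ e).map (Equiv.swap a b) :=
  if_pos ⟨v, hv, hvS⟩

lemma kempeSwap_of_not_mem (hS : IsKempeClosed ep φ a b S) {e : E} {v : V} (hv : v ∈ ep e)
    (hvS : v ∉ S) : kempeSwap ep φ a b S e = φ e := by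
  unfold kempeSwap
  split_ifs with h
  · obtain ⟨w, hw, hwS⟩ := h
    rcases hφe : φ e with _ | c
    · rfl
    · have hca : c ≠ a := fun hca => hvS (hS e (.inl (hca ▸ hφe)) w hw v hv hwS)
      have hcb : c ≠ b := fun hcb => hvS (hS e (.inr (hcb ▸ hφe)) w hw v hv hwS)
      simp [Equiv.swap_apply_of_ne_of_ne hca hcb]
  · rfl

lemma kempeSwap_eq_some_iff_of_ne {e : E} {c : C} (hca : c ≠ a) (hcb : c ≠ b) :
    kempeSwap ep φ a b S e = some c ↔ φ e = some c := by
  unfold kempeSwap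
  split_ifs
  · rw [map_swap_eq_some_iff, Equiv.swap_apply_of_ne_of_ne hca hcb]
  · rfl

lemma isSome_kempeSwap (e : E) : (kempeSwap ep φ a b S e).isSome = (φ e).isSome := by
  unfold kempeSwap
  split_ifs <;> simp

lemma IsProper.kempeSwap (hφ : IsProper ep φ) (hS : IsKempeClosed ep φ a b S) :
    IsProper ep (kempeSwap ep φ a b S) := by
  intro v e e' c he he' hc hc'
  by_cases hvS : v ∈ S
  · rw [kempeSwap_of_mem he hvS, map_swap_eq_some_iff] at hc
    rw [kempeSwap_of_mem he' hvS, map_swap_eq_some_iff] at hc'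
    exact hφ he he' hc hc'
  · rw [kempeSwap_of_not_mem hS he hvS] at hc
    rw [kempeSwap_of_not_mem hS he' hvS] at hc'
    exact hφ he he' hc hc'

lemma missing_kempeSwap_of_mem {v : V} (hvS : v ∈ S) {c : C} :
    Missing ep (kempeSwap ep φ a b S) v c ↔ Missing ep φ v (Equiv.swap a b c) := by
  refine forall₂_congr fun e he => not_congr ?_
  rw [kempeSwap_of_mem he hvS, map_swap_eq_some_iff]

lemma missing_kempeSwap_of_not_mem (hS : IsKempeClosed ep φ a b S) {v : V} (hvS : v ∉ S)
    {c : C} : Missing ep (kempeSwap ep φ a b S) v c ↔ Missing ep φ v c := by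
  refine forall₂_congr fun e he => ?_
  rw [kempeSwap_of_not_mem hS he hvS]

lemma missing_kempeSwap_of_ne {v : V} {c : C} (hca : c ≠ a) (hcb : c ≠ b) :
    Missing ep (kempeSwap ep φ a b S) v c ↔ Missing ep φ v c :=
  forall₂_congr fun _ _ => not_congr (kempeSwap_eq_some_iff_of_ne hca hcb)

variable [Fintype V] [Fintype E]

lemma kempeGraph_degree_le (hφ : IsProper ep φ) (v : V) :
    (kempeGraph ep φ a b).degree v ≤ #{c ∈ ({a, b} : Finset C) | ¬ Missing ep φ v c} := by
  set K : Finset E := {e | v ∈ ep e ∧ (φ e = some a ∨ φ e = some b)}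
  rw [← SimpleGraph.card_incidenceFinset_eq_degree]
  calc #((kempeGraph ep φ a b).incidenceFinset v) ≤ #(K.image ep) := by
        refine card_le_card fun s hs => ?_
        rw [SimpleGraph.mem_incidenceFinset, SimpleGraph.incidenceSet, kempeGraph,
          SimpleGraph.edgeSet_fromEdgeSet] at hs
        obtain ⟨⟨⟨e, rfl, he⟩, -⟩, hv⟩ := hs
        exact mem_image_of_mem ep (by simp [K, hv, he])
    _ ≤ #K := card_image_le
    _ ≤ #({c ∈ ({a, b} : Finset C) | ¬ Missing ep φ v c}.image some) := by
        refine card_le_card_of_injOn φ (fun e he => ?_) fun e he e' he' hee' => ?_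
        · simp only [K, coe_filter, mem_univ, true_and] at he
          obtain ⟨hv, hc | hc⟩ := he <;> rw [hc] <;>
            exact mem_image_of_mem some (mem_filter.2 ⟨by simp, fun h => h e hv hc⟩)
        · simp only [K, coe_filter, mem_univ, true_and] at he he'
          obtain ⟨hv, hc | hc⟩ := he <;> exact hφ hv he'.1 hc (hee' ▸ hc)
    _ = #{c ∈ ({a, b} : Finset C) | ¬ Missing ep φ v c} :=
        card_image_of_injective _ (Option.some_injective _)

lemma kempeGraph_degree_le_two (hφ : IsProper ep φ) (v : V) :
    (kempeGraph ep φ a b).degree v ≤ 2 :=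
  (kempeGraph_degree_le hφ v).trans <| (card_filter_le _ _).trans card_le_two

lemma kempeGraph_degree_le_one (hφ : IsProper ep φ) {v : V}
    (hv : Missing ep φ v a ∨ Missing ep φ v b) : (kempeGraph ep φ a b).degree v ≤ 1 := by
  refine (kempeGraph_degree_le hφ v).trans (card_le_one.2 fun c hc d hd => ?_)
  simp only [mem_filter, mem_insert, mem_singleton] at hc hd
  rcases hv with hv | hv <;> grind

/-- A Kempe component is a path or a cycle, so it contains at most two vertices missing `a` or
`b`. -/
lemma eq_of_kempeGraph_reachable (hφ : IsProper ep φ) {x u w : V}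
    (hx : Missing ep φ x a ∨ Missing ep φ x b) (hu : Missing ep φ u a ∨ Missing ep φ u b)
    (hw : Missing ep φ w a ∨ Missing ep φ w b) (hxu : x ≠ u) (hxw : x ≠ w)
    (hru : (kempeGraph ep φ a b).Reachable x u) (hrw : (kempeGraph ep φ a b).Reachable x w) :
    u = w :=
  hru.eq_of_degree_le_one (kempeGraph_degree_le_two hφ) hrw hxu hxw
    (kempeGraph_degree_le_one hφ hx) (kempeGraph_degree_le_one hφ hu)
    (kempeGraph_degree_le_one hφ hw)

end Kempe

section Fan

structure IsFan (ep : E → Sym2 V) (φ : E → Option C) (x : V) (e₀ : E) (p : ℕ) (ed : ℕ → E)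
    (vx : ℕ → V) : Prop where
  first : ed 0 = e₀
  ends : ∀ i < p, ep (ed i) = s(x, vx i)
  injOn : Set.InjOn ed (Set.Iio p)
  cond : ∀ i, 0 < i → i < p → ∃ m < i, ∃ c, φ (ed i) = some c ∧ Missing ep φ (vx m) c

variable {x : V} {e₀ : E} {p i : ℕ} {ed : ℕ → E} {vx : ℕ → V}

lemma IsFan.mem_left (hfan : IsFan ep φ x e₀ p ed vx) (hi : i < p) : x ∈ ep (ed i) := by
  rw [hfan.ends i hi]; exact Sym2.mem_mk_left _ _

lemma IsFan.mem_right (hfan : IsFan ep φ x e₀ p ed vx) (hi : i < p) : vx i ∈ ep (ed i) := by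
  rw [hfan.ends i hi]; exact Sym2.mem_mk_right _ _

lemma IsFan.of_le (hfan : IsFan ep φ x e₀ p ed vx) {q : ℕ} (hqp : q ≤ p) :
    IsFan ep φ x e₀ q ed vx where
  first := hfan.first
  ends i hi := hfan.ends i (hi.trans_le hqp)
  injOn := hfan.injOn.mono (Set.Iio_subset_Iio hqp)
  cond i hi0 hi := hfan.cond i hi0 (hi.trans_le hqp)

lemma IsFan.recolor (hfan : IsFan ep φ x e₀ p ed vx) (hi : i < p) {c : C}
    (hx : Missing ep φ x c) : IsFan ep (Function.update φ (ed i) (some c)) x e₀ i ed vx where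
  __ := hfan.of_le hi.le
  cond l hl0 hl := by
    obtain ⟨m, hm, d, hd, hmiss⟩ := hfan.cond l hl0 (hl.trans hi)
    have hne : ed l ≠ ed i := fun h => hl.ne (hfan.injOn (hl.trans hi) hi h)
    have hdc : d ≠ c := fun h => hx (ed l) (hfan.mem_left (hl.trans hi)) (h ▸ hd)
    exact ⟨m, hm, d, by rwa [Function.update_of_ne hne], hmiss.update hdc _⟩

theorem IsFan.not_missing_both (hφ : IsProper ep φ) (hstuck : Stuck ep φ e₀)
    (hfan : IsFan ep φ x e₀ p ed vx) (hi : i < p) {c : C} (hx : Missing ep φ x c)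
    (hy : Missing ep φ (vx i) c) : False := by
  induction i using Nat.strong_induction_on generalizing φ p c with
  | _ i ih =>
  rcases Nat.eq_zero_or_pos i with rfl | hi0
  · exact hstuck.not_missing_both hφ (hfan.first ▸ hfan.ends 0 hi) hx hy
  -- recolour `ed i` with `c`: its old colour `d` becomes missing at `x` and is missing at `vx m`
  obtain ⟨m, hm, d, hd, hmiss⟩ := hfan.cond i hi0 hi
  have hdc : d ≠ c := fun h => hx (ed i) (hfan.mem_left hi) (h ▸ hd)
  refine ih m hm (hφ.update fun v hv => ?_) (hstuck.mono fun e he => ?_)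
    (hfan.recolor hi hx) hm (hφ.missing_update (hfan.mem_left hi) hd hdc) (hmiss.update hdc _)
  · rw [hfan.ends i hi, Sym2.mem_iff] at hv
    rcases hv with rfl | rfl
    exacts [hx, hy]
  · rcases eq_or_ne e (ed i) with rfl | hne
    · simp
    · rwa [Function.update_of_ne hne]

lemma IsFan.kempeSwap (hfan : IsFan ep φ x e₀ p ed vx) {α δ : C} {S : Set V}
    (hS : IsKempeClosed ep φ α δ S) (hxS : x ∉ S) (hδ : Missing ep φ x δ)
    (hα : ∀ l < p, φ (ed l) = some α → ∃ m < l, Missing ep φ (vx m) α ∧ vx m ∉ S) :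
    IsFan ep (kempeSwap ep φ α δ S) x e₀ p ed vx where
  __ := hfan
  cond l hl0 hl := by
    obtain ⟨m, hm, c, hc, hmiss⟩ := hfan.cond l hl0 hl
    rw [kempeSwap_of_not_mem hS (hfan.mem_left hl) hxS]
    by_cases hcα : c = α
    · subst hcα
      obtain ⟨m', hm', hmiss', hm'S⟩ := hα l hl hc
      exact ⟨m', hm', c, hc, (missing_kempeSwap_of_not_mem hS hm'S).2 hmiss'⟩
    · have hcδ : c ≠ δ := fun h => hδ (ed l) (hfan.mem_left hl) (h ▸ hc)
      exact ⟨m, hm, c, hc, (missing_kempeSwap_of_ne hcα hcδ).2 hmiss⟩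

/-- After the swap, `δ` is missing at both `x` and `vx t`. -/
lemma IsFan.false_of_kempeSwap (hφ : IsProper ep φ) (hstuck : Stuck ep φ e₀)
    (hfan : IsFan ep φ x e₀ p ed vx) {α δ : C} (hδ : Missing ep φ x δ) {S : Set V}
    (hS : IsKempeClosed ep φ α δ S) (hxS : x ∉ S) {t : ℕ} (ht : t < p) (htS : vx t ∈ S)
    (hαt : Missing ep φ (vx t) α)
    (hα : ∀ l ≤ t, φ (ed l) = some α → ∃ m < l, Missing ep φ (vx m) α ∧ vx m ∉ S) : False :=
  ((hfan.of_le ht).kempeSwap hS hxS hδ fun l hl => hα l (Nat.lt_succ_iff.1 hl)).not_missing_both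
    (hφ.kempeSwap hS) (hstuck.mono fun e he => by rwa [isSome_kempeSwap]) (Nat.lt_succ_self t)
    ((missing_kempeSwap_of_not_mem hS hxS).2 hδ)
    ((missing_kempeSwap_of_mem htS).2 (by rwa [Equiv.swap_apply_right]))

/-- Let `i₀` be the first fan vertex missing `α`, so that no fan edge up to `i₀` has colour `α`.
Swap `α` and `δ` on the Kempe component of `vx i₀` if it avoids `x`; otherwise that component
already has its two ends `x` and `vx i₀`, and the component of the other vertex avoids both. -/
theorem IsFan.not_missing_both_of_ne [Fintype V] [Fintype E] (hφ : IsProper ep φ)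
    (hstuck : Stuck ep φ e₀) (hfan : IsFan ep φ x e₀ p ed vx) {δ : C} (hδ : Missing ep φ x δ)
    {i j : ℕ} (hi : i < p) (hj : j < p) (hij : vx i ≠ vx j) {α : C}
    (hαi : Missing ep φ (vx i) α) (hαj : Missing ep φ (vx j) α) : False := by
  have hx_ne {l : ℕ} (hl : Missing ep φ (vx l) α) : x ≠ vx l := fun h =>
    hfan.not_missing_both hφ hstuck hi (h ▸ hl) hαi
  have hex : ∃ l, l < p ∧ Missing ep φ (vx l) α := ⟨i, hi, hαi⟩
  obtain ⟨hi₀, hαi₀⟩ := Nat.find_spec hex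
  set i₀ := Nat.find hex
  have hαed : ∀ l < p, φ (ed l) = some α → i₀ < l := by
    intro l hl hlα
    rcases Nat.eq_zero_or_pos l with rfl | hl0
    · rw [hfan.first, hstuck.eq_none hφ] at hlα
      cases hlα
    · obtain ⟨m, hm, c, hc, hmiss⟩ := hfan.cond l hl0 hl
      obtain rfl : c = α := Option.some_inj.1 (hc.symm.trans hlα)
      exact (Nat.find_min' hex ⟨hm.trans hl, hmiss⟩).trans_lt hm
  set G := kempeGraph ep φ α δ
  by_cases hux : G.Reachable (vx i₀) x
  · obtain ⟨t, ht, hαt, hti₀⟩ : ∃ t < p, Missing ep φ (vx t) α ∧ vx t ≠ vx i₀ := by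
      by_cases h : vx i = vx i₀
      · exact ⟨j, hj, hαj, fun h' => hij (h.trans h'.symm)⟩
      · exact ⟨i, hi, hαi, h⟩
    have hsep : ∀ v, G.Reachable (vx t) v → ¬ G.Reachable v x := fun v htv hvx =>
      hti₀ (eq_of_kempeGraph_reachable hφ (.inr hδ) (.inl hαi₀) (.inl hαt) (hx_ne hαi₀)
        (hx_ne hαt) hux.symm (htv.trans hvx).symm).symm
    exact hfan.false_of_kempeSwap hφ hstuck hδ (isKempeClosed_reachable _)
      (fun h => hsep x h .rfl) ht .rfl hαt fun l hl hlα =>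
        ⟨i₀, hαed l (hl.trans_lt ht) hlα, hαi₀, fun h => hsep _ h hux⟩
  · exact hfan.false_of_kempeSwap hφ hstuck hδ (isKempeClosed_reachable _) hux hi₀ .rfl hαi₀
      fun l hl hlα => absurd (hαed l (hl.trans_lt hi₀) hlα) hl.not_gt

lemma isFan_one {y : V} (he₀ : ep e₀ = s(x, y)) :
    IsFan ep φ x e₀ 1 (fun _ => e₀) (fun _ => y) where
  first := rfl
  ends _ _ := he₀
  injOn i hi j hj _ := by simp only [Set.mem_Iio] at hi hj; omega
  cond i hi0 hi := by omega

lemma IsFan.snoc (hfan : IsFan ep φ x e₀ p ed vx) (hp : 0 < p) {f : E} {y : V}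
    (hf : ep f = s(x, y)) (hfp : ∀ l < p, ed l ≠ f) {m : ℕ} (hm : m < p) {c : C}
    (hc : φ f = some c) (hmiss : Missing ep φ (vx m) c) :
    IsFan ep φ x e₀ (p + 1) (Function.update ed p f) (Function.update vx p y) where
  first := by rw [Function.update_of_ne hp.ne, hfan.first]
  ends i hi := by
    rcases (Nat.lt_succ_iff.1 hi).lt_or_eq with hi | rfl
    · simp only [Function.update_of_ne hi.ne, hfan.ends i hi]
    · simp only [Function.update_self, hf]
  injOn i hi j hj hij := by
    simp only [Set.mem_Iio, Nat.lt_succ_iff] at hi hj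
    rcases hi.lt_or_eq with hi | rfl <;> rcases hj.lt_or_eq with hj | rfl
    · simp only [Function.update_of_ne hi.ne, Function.update_of_ne hj.ne] at hij
      exact hfan.injOn hi hj hij
    · simp only [Function.update_of_ne hi.ne, Function.update_self] at hij
      exact absurd hij (hfp i hi)
    · simp only [Function.update_of_ne hj.ne, Function.update_self] at hij
      exact absurd hij.symm (hfp j hj)
    · rfl
  cond i hi0 hi := by
    rcases (Nat.lt_succ_iff.1 hi).lt_or_eq with hi | rfl
    · obtain ⟨m', hm', d, hd, hmiss'⟩ := hfan.cond i hi0 hi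
      exact ⟨m', hm', d, by rwa [Function.update_of_ne hi.ne],
        by rwa [Function.update_of_ne (hm'.trans hi).ne]⟩
    · exact ⟨m, hm, c, by rwa [Function.update_self],
        by rwa [Function.update_of_ne hm.ne]⟩

lemma IsFan.length_le_card [Fintype E] (hfan : IsFan ep φ x e₀ p ed vx) :
    p ≤ Fintype.card E := by
  simpa using Fintype.card_le_of_injective (fun i : Fin p => ed i)
    fun i j h => Fin.ext (hfan.injOn i.2 j.2 h)

lemma exists_maximal_isFan [Fintype E] {y : V} (he₀ : ep e₀ = s(x, y)) :
    ∃ p ed vx, IsFan ep φ x e₀ p ed vx ∧ 0 < p ∧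
      ∀ q ed' vx', IsFan ep φ x e₀ q ed' vx' → q ≤ p := by
  let P q := ∃ ed vx, IsFan ep φ x e₀ q ed vx
  have h1 : P 1 := ⟨_, _, isFan_one he₀⟩
  have hle : ∀ {q}, P q → q ≤ Fintype.card E := fun ⟨_, _, hfan⟩ => hfan.length_le_card
  obtain ⟨ed, vx, hfan⟩ := Nat.findGreatest_spec (hle h1) h1
  exact ⟨_, ed, vx, hfan, Nat.le_findGreatest (hle h1) h1,
    fun q ed' vx' hfan' => Nat.le_findGreatest (hle ⟨_, _, hfan'⟩) ⟨_, _, hfan'⟩⟩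

lemma IsFan.exists_eq_of_maximal (hfan : IsFan ep φ x e₀ p ed vx) (hp : 0 < p)
    (hmax : ∀ q ed' vx', IsFan ep φ x e₀ q ed' vx' → q ≤ p) {f : E} (hf : x ∈ ep f) {c : C}
    (hc : φ f = some c) {m : ℕ} (hm : m < p) (hmiss : Missing ep φ (vx m) c) :
    ∃ l < p, ed l = f := by
  by_contra! hfp
  obtain ⟨y, hy⟩ := Sym2.mem_iff_exists.1 hf
  exact (hmax _ _ _ (hfan.snoc hp hy hfp hm hc hmiss)).not_gt (lt_add_one p)

lemma IsFan.length_le [Fintype E] {μ : ℕ}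
    (hμ : ∀ s : Sym2 V, Nat.card {e : E // ep e = s} ≤ μ) (hfan : IsFan ep φ x e₀ p ed vx) :
    p ≤ #((range p).image vx) * μ := by
  calc p = ∑ y ∈ (range p).image vx, #{l ∈ range p | vx l = y} := by
        rw [← card_eq_sum_card_image, card_range]
    _ ≤ ∑ _y ∈ (range p).image vx, μ := sum_le_sum fun y _ => ?_
    _ = #((range p).image vx) * μ := by rw [sum_const, smul_eq_mul]
  have hpar := hμ s(x, y)
  rw [Nat.card_eq_fintype_card, Fintype.card_subtype] at hpar
  refine (card_le_card_of_injOn ed (fun l hl => ?_) (hfan.injOn.mono fun l hl => ?_)).trans hpar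
  · simp only [coe_filter, mem_range] at hl
    simp [hfan.ends l hl.1, hl.2]
  · simp only [coe_filter, mem_range] at hl
    exact hl.1

end Fan

section Counting

variable [Fintype C] {x : V} {e₀ : E} {p : ℕ} {ed : ℕ → E} {vx : ℕ → V}

noncomputable def missingColors (ep : E → Sym2 V) (φ : E → Option C) (v : V) : Finset C :=
  {c | Missing ep φ v c}

lemma card_le_card_missingColors_add [Fintype E] (v : V) :
    Fintype.card C ≤ #(missingColors ep φ v) + #{e | v ∈ ep e ∧ (φ e).isSome} := by
  have hpresent : #{c | ¬ Missing ep φ v c} ≤ #{e | v ∈ ep e ∧ (φ e).isSome} :=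
    calc #{c | ¬ Missing ep φ v c} = #(({c | ¬ Missing ep φ v c} : Finset C).image some) :=
          (card_image_of_injective _ (Option.some_injective _)).symm
      _ ≤ #(({e | v ∈ ep e ∧ (φ e).isSome} : Finset E).image φ) := card_le_card fun o ho => by
          simp only [mem_image, mem_filter, mem_univ, true_and, Missing, not_forall,
            not_not] at ho ⊢
          obtain ⟨c, ⟨e, hv, he⟩, rfl⟩ := ho
          exact ⟨e, ⟨hv, by simp [he]⟩, he⟩
      _ ≤ _ := card_image_le
  have := card_filter_add_card_filter_not (s := univ) fun c => Missing ep φ v c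
  rw [card_univ] at this
  unfold missingColors
  omega

variable [Fintype E] {Δ μ : ℕ}

lemma le_card_missingColors (hC : Δ + μ ≤ Fintype.card C)
    (hΔ : ∀ v : V, Nat.card {e : E // v ∈ ep e} ≤ Δ) (v : V) :
    μ ≤ #(missingColors ep φ v) := by
  have hdeg := hΔ v
  rw [Nat.card_eq_fintype_card, Fintype.card_subtype] at hdeg
  have := card_le_card (s := {e | v ∈ ep e ∧ (φ e).isSome}) (t := {e | v ∈ ep e})
    fun e he => by simp only [mem_filter, mem_univ, true_and] at he ⊢; exact he.1
  have := card_le_card_missingColors_add (ep := ep) (φ := φ) v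
  omega

lemma lt_card_missingColors (hC : Δ + μ ≤ Fintype.card C)
    (hΔ : ∀ v : V, Nat.card {e : E // v ∈ ep e} ≤ Δ) (he₀ : φ e₀ = none) {v : V}
    (hv : v ∈ ep e₀) : μ < #(missingColors ep φ v) := by
  have hdeg := hΔ v
  rw [Nat.card_eq_fintype_card, Fintype.card_subtype] at hdeg
  have := card_lt_card (s := {e | v ∈ ep e ∧ (φ e).isSome}) (t := {e | v ∈ ep e}) <|
    (ssubset_iff_of_subset fun e he => by
      simp only [mem_filter, mem_univ, true_and] at he ⊢; exact he.1).2
        ⟨e₀, by simpa using hv, by simp [he₀]⟩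
  have := card_le_card_missingColors_add (ep := ep) (φ := φ) v
  omega

lemma IsFan.add_one_le_sum_card_missingColors (hC : Δ + μ ≤ Fintype.card C)
    (hΔ : ∀ v : V, Nat.card {e : E // v ∈ ep e} ≤ Δ) (he₀ : φ e₀ = none)
    (hfan : IsFan ep φ x e₀ p ed vx) (hp : 0 < p) :
    #((range p).image vx) * μ + 1 ≤ ∑ y ∈ (range p).image vx, #(missingColors ep φ y) := by
  have h0 : vx 0 ∈ (range p).image vx := mem_image_of_mem vx (mem_range.2 hp)
  calc #((range p).image vx) * μ + 1
        = ∑ y ∈ (range p).image vx, (μ + if y = vx 0 then 1 else 0) := by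
          simp [sum_add_distrib, h0]
    _ ≤ _ := sum_le_sum fun y _ => by
          split_ifs with hy
          · exact lt_card_missingColors hC hΔ he₀ (hy ▸ hfan.first ▸ hfan.mem_right hp)
          · simpa using le_card_missingColors hC hΔ y

/-- Each colour missing at a fan vertex is present at `x` (by `IsFan.not_missing_both`), so by
maximality on a coloured fan edge, and no colour is missing at two fan vertices. -/
lemma IsFan.sum_card_missingColors_le [Fintype V] (hφ : IsProper ep φ)
    (hstuck : Stuck ep φ e₀) (hfan : IsFan ep φ x e₀ p ed vx) (hp : 0 < p)
    (hmax : ∀ q ed' vx', IsFan ep φ x e₀ q ed' vx' → q ≤ p) {δ : C} (hδ : Missing ep φ x δ) :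
    ∑ y ∈ (range p).image vx, #(missingColors ep φ y) ≤ p - 1 := by
  rw [← card_biUnion]
  · calc #(((range p).image vx).biUnion (missingColors ep φ))
          = #((((range p).image vx).biUnion (missingColors ep φ)).image some) :=
            (card_image_of_injective _ (Option.some_injective _)).symm
      _ ≤ #((Ico 1 p).image (φ ∘ ed)) := card_le_card fun o ho => ?_
      _ ≤ #(Ico 1 p) := card_image_le
      _ = p - 1 := Nat.card_Ico 1 p
    simp only [mem_image, mem_biUnion, mem_range, missingColors, mem_filter, mem_univ,
      true_and] at ho
    obtain ⟨c, ⟨_, ⟨m, hm, rfl⟩, hmiss⟩, rfl⟩ := ho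
    have hx : ¬ Missing ep φ x c := fun hx => hfan.not_missing_both hφ hstuck hm hx hmiss
    simp only [Missing, not_forall, not_not] at hx
    obtain ⟨f, hf, hc⟩ := hx
    obtain ⟨l, hl, rfl⟩ := hfan.exists_eq_of_maximal hp hmax hf hc hm hmiss
    have hl0 : l ≠ 0 := by
      rintro rfl
      rw [hfan.first, hstuck.eq_none hφ] at hc
      cases hc
    exact mem_image.2 ⟨l, mem_Ico.2 ⟨by omega, hl⟩, hc⟩
  · intro y hy y' hy' hne
    simp only [coe_image, coe_range, Set.mem_image, Set.mem_Iio] at hy hy'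
    obtain ⟨i, hi, rfl⟩ := hy
    obtain ⟨j, hj, rfl⟩ := hy'
    refine disjoint_left.2 fun c hc hc' => ?_
    simp only [missingColors, mem_filter, mem_univ, true_and] at hc hc'
    exact hfan.not_missing_both_of_ne hφ hstuck hδ hi hj hne hc hc'

theorem not_stuck [Fintype V] (hC : Δ + μ ≤ Fintype.card C)
    (hΔ : ∀ v : V, Nat.card {e : E // v ∈ ep e} ≤ Δ)
    (hμ : ∀ s : Sym2 V, Nat.card {e : E // ep e = s} ≤ μ) (hφ : IsProper ep φ) (e₀ : E) :
    ¬ Stuck ep φ e₀ := by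
  intro hstuck
  obtain ⟨x, y, he₀⟩ : ∃ x y, ep e₀ = s(x, y) := (ep e₀).ind fun x y => ⟨x, y, rfl⟩
  obtain ⟨p, ed, vx, hfan, hp, hmax⟩ := exists_maximal_isFan (φ := φ) he₀
  obtain ⟨δ, hδ⟩ : (missingColors ep φ x).Nonempty := card_pos.1 <| (Nat.zero_le μ).trans_lt <|
    lt_card_missingColors hC hΔ (hstuck.eq_none hφ) (he₀ ▸ Sym2.mem_mk_left x y)
  have hlower := hfan.add_one_le_sum_card_missingColors hC hΔ (hstuck.eq_none hφ) hp
  have hupper := hfan.sum_card_missingColors_le hφ hstuck hp hmax (mem_filter.1 hδ).2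
  have hlength := hfan.length_le hμ
  generalize #((range p).image vx) * μ = k at *
  omega

end Counting

theorem exists_isProper_forall_isSome [Fintype V] [Fintype E] [Fintype C] {Δ μ : ℕ}
    (hC : Δ + μ ≤ Fintype.card C) (hΔ : ∀ v : V, Nat.card {e : E // v ∈ ep e} ≤ Δ)
    (hμ : ∀ s : Sym2 V, Nat.card {e : E // ep e = s} ≤ μ) :
    ∃ φ : E → Option C, IsProper ep φ ∧ ∀ e, (φ e).isSome := by
  suffices ∀ F : Finset E, ∃ φ : E → Option C, IsProper ep φ ∧ ∀ e ∈ F, (φ e).isSome by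
    simpa using this univ
  intro F
  induction F using Finset.induction_on with
  | empty => exact ⟨fun _ => none, fun _ _ _ _ _ _ h => (nomatch h), by simp⟩
  | insert e₀ F _ ih =>
    obtain ⟨φ, hφ, hF⟩ := ih
    have := not_stuck hC hΔ hμ hφ e₀
    simp only [Stuck, not_forall] at this
    obtain ⟨ψ, hψ, hdom, he₀⟩ := this
    exact ⟨ψ, hψ, (forall_mem_insert _ _ _).2
      ⟨Option.ne_none_iff_isSome.1 he₀, fun e he => hdom e (hF e he)⟩⟩

end EdgeColoring

theorem stmt_11_general {V E : Type*} [Fintype V] [Fintype E]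
    (ep : E → Sym2 V)
    (Δ μ : ℕ)
    (hΔ : ∀ v : V, Nat.card {e : E // v ∈ ep e} ≤ Δ)
    (hμ : ∀ s : Sym2 V, Nat.card {e : E // ep e = s} ≤ μ) :
    ∃ c : E → Fin (Δ + μ), ∀ e e' : E, e ≠ e' →
      (∃ v : V, v ∈ ep e ∧ v ∈ ep e') → c e ≠ c e' := by
  obtain ⟨φ, hφ, hall⟩ :=
    EdgeColoring.exists_isProper_forall_isSome (C := Fin (Δ + μ)) (by simp) hΔ hμ
  refine ⟨fun e => (φ e).get (hall e), fun e e' hne ⟨v, hv, hv'⟩ hc =>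
    hne (hφ hv hv' (Option.some_get (hall e)).symm ?_)⟩
  rw [Option.eq_some_iff_get_eq]
  exact ⟨hall e', hc.symm⟩

/-- Vizing's theorem for multigraphs (Ore/Vizing bound): a loopless multigraph with
maximum degree at most `Δ` and edge multiplicity at most `μ` admits a proper edge
coloring with `Δ + μ` colors. Edges are given by an index type `E` with endpoint
map `ep : E → Sym2 V`. -/
theorem stmt_11 {V E : Type*} [Fintype V] [Fintype E]
    (ep : E → Sym2 V) (hloop : ∀ e, ¬ (ep e).IsDiag)
    (Δ μ : ℕ)
    (hΔ : ∀ v : V, Nat.card {e : E // v ∈ ep e} ≤ Δ)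
    (hμ : ∀ s : Sym2 V, Nat.card {e : E // ep e = s} ≤ μ) :
    ∃ c : E → Fin (Δ + μ), ∀ e e' : E, e ≠ e' →
      (∃ v : V, v ∈ ep e ∧ v ∈ ep e') → c e ≠ c e' :=
  stmt_11_general ep Δ μ hΔ hμ
end
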